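/- (Carlitz) For all n ≥ 1, x^n + y^n = ∑_{k=0}^{⌊n/2⌋} q^{k(k-1)/2} · ([n]/[n-k]) · qbinom(n-k,k) · (-xy)^k · r_{n-2k}(x,y). -/

import Mathlib

open Finset

noncomputable section

abbrev K : Type := RatFunc ℚ

def q : K := RatFunc.X

def qint (a : K) (m : ℕ) : K := ∑ i ∈ range m, a ^ i

def qfact (a : K) (m : ℕ) : K := ∏ i ∈ range m, qint a (i + 1)

def qbinom (a : K) (n k : ℕ) : K :=
  if k ≤ n then qfact a n / (qfact a k * qfact a (n - k)) else 0

/-- q-Fibonacci polynomials F_n(x,s,q) with base `a`. -/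
def qF (a x s : K) : ℕ → K
  | 0 => 0
  | n + 1 => ∑ k ∈ range (n / 2 + 1),
      a ^ (k * (k + 1) / 2) * qbinom a (n - k) k * s ^ k * x ^ (n - 2 * k)

/-- q-Lucas polynomials L_n(x,s,q) with base `a` (L_0 = 2). -/
def qL (a x s : K) (n : ℕ) : K :=
  if n = 0 then 2 else
  ∑ k ∈ range (n / 2 + 1),
    a ^ (k * (k - 1) / 2) * (qint a n / qint a (n - k)) * qbinom a (n - k) k
      * s ^ k * x ^ (n - 2 * k)

/-- Starred variant: L*_0 = 1, L*_n = L_n for n > 0. -/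
def qLs (a x s : K) (n : ℕ) : K := if n = 0 then 1 else qL a x s n

/-- Rogers-Szegő polynomial. -/
def rs (a x y : K) (m : ℕ) : K := ∑ j ∈ range (m + 1), qbinom a m j * x ^ j * y ^ (m - j)

/-- q-Pochhammer (q;q)_m. -/
def qpoch (a : K) (m : ℕ) : K := ∏ j ∈ range m, (1 - a ^ (j + 1))

/-
Expanding each `r_{n-2k}` and collecting monomials, the coefficient of `x ^ j * y ^ (n - j)` on the
right is `∑ k, carlitzCoeff a n j k`. For `j = 0` and `j = n` only `k = 0` contributes, giving `1`.
For `0 < j < n` the sum telescopes (a Gosper-type certificate): with `c k = carlitzCoeff a n j k`,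
  `(∑ k < i, c k) * [j] * [n - j] = -[i] * [n - i] * c i`,
which follows by induction on `i` from the term ratio
  `c (k + 1) * [k + 1] * [n - k - 1] = -a ^ k * [j - k] * [n - j - k] * c k`
and the identity `[j] * [n - j] - [i] * [n - i] = a ^ i * [j - i] * [n - j - i]`;
at `i = j` it gives `(∑ k ≤ j, c k) * [j] * [n - j] = 0`.
-/

section

variable (a : K)

theorem qint_add (m n : ℕ) : qint a (m + n) = qint a m + a ^ m * qint a n := by
  simp only [qint, sum_range_add, pow_add, mul_sum]

theorem one_sub_mul_qint (m : ℕ) : (1 - a) * qint a m = 1 - a ^ m := mul_neg_geom_sum a m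

theorem qint_add_mul_qint_add_sub (i r s : ℕ) :
    qint a (i + r) * qint a (i + s) - qint a i * qint a (i + r + s)
      = a ^ i * qint a r * qint a s := by
  rw [qint_add a i r, qint_add a i s, add_assoc, qint_add a i (r + s), qint_add a r s]
  linear_combination (-(a ^ i * qint a s * qint a i)) * one_sub_mul_qint a r
    + a ^ i * qint a s * qint a r * one_sub_mul_qint a i

theorem qfact_zero : qfact a 0 = 1 := prod_range_zero _

theorem qfact_succ (m : ℕ) : qfact a (m + 1) = qfact a m * qint a (m + 1) :=
  prod_range_succ _ _

theorem qfact_ne_zero (ha : ∀ m, m ≠ 0 → qint a m ≠ 0) (m : ℕ) : qfact a m ≠ 0 :=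
  prod_ne_zero_iff.mpr fun i _ => ha _ i.succ_ne_zero

theorem qbinom_of_le {n k : ℕ} (h : k ≤ n) :
    qbinom a n k = qfact a n / (qfact a k * qfact a (n - k)) :=
  if_pos h

theorem qbinom_of_lt {n k : ℕ} (h : n < k) : qbinom a n k = 0 :=
  if_neg (not_le.mpr h)

theorem qbinom_zero_right (ha : ∀ m, m ≠ 0 → qint a m ≠ 0) (n : ℕ) : qbinom a n 0 = 1 := by
  rw [qbinom_of_le a n.zero_le, Nat.sub_zero, qfact_zero, one_mul,
    div_self (qfact_ne_zero a ha n)]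

theorem qbinom_self (ha : ∀ m, m ≠ 0 → qint a m ≠ 0) (n : ℕ) : qbinom a n n = 1 := by
  rw [qbinom_of_le a le_rfl, Nat.sub_self, qfact_zero, mul_one,
    div_self (qfact_ne_zero a ha n)]

end

-- The coefficient of `s ^ k * x ^ (n - 2 * k)` in `qL a x s n`.
def lucasWeight (a : K) (n k : ℕ) : K :=
  a ^ (k * (k - 1) / 2) * (qint a n / qint a (n - k)) * qbinom a (n - k) k

def carlitzCoeff (a : K) (n j k : ℕ) : K :=
  (-1) ^ k * lucasWeight a n k * qbinom a (n - 2 * k) (j - k)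

section

variable {a : K}

theorem lucasWeight_eq_zero {n k : ℕ} (h : n < 2 * k) : lucasWeight a n k = 0 := by
  rw [lucasWeight, qbinom_of_lt a (by omega), mul_zero]

theorem lucasWeight_zero_right (ha : ∀ m, m ≠ 0 → qint a m ≠ 0) {n : ℕ} (hn : n ≠ 0) :
    lucasWeight a n 0 = 1 := by
  simp [lucasWeight, div_self (ha n hn), qbinom_zero_right a ha]

theorem carlitzCoeff_zero_right (ha : ∀ m, m ≠ 0 → qint a m ≠ 0) {n : ℕ} (hn : n ≠ 0) (j : ℕ) :
    carlitzCoeff a n j 0 = qbinom a n j := by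
  simp [carlitzCoeff, lucasWeight_zero_right ha hn]

theorem carlitzCoeff_eq_zero {n j k : ℕ} (hkj : k ≤ j) (h : n < j + k) :
    carlitzCoeff a n j k = 0 := by
  rcases lt_or_ge n (2 * k) with hk | hk
  · rw [carlitzCoeff, lucasWeight_eq_zero hk, mul_zero, zero_mul]
  · rw [carlitzCoeff, qbinom_of_lt a (by omega), mul_zero]

theorem carlitzCoeff_mul_qfact (ha : ∀ m, m ≠ 0 → qint a m ≠ 0) {n j k : ℕ}
    (hkj : k ≤ j) (hjk : j + k ≤ n) (hk : k < n) :
    carlitzCoeff a n j k * (qfact a k * qfact a (j - k) * qfact a (n - j - k))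
      = (-1) ^ k * a ^ (k * (k - 1) / 2) * qint a n * qfact a (n - k - 1) := by
  obtain ⟨m, hm⟩ : ∃ m, n - k = m + 1 := ⟨n - k - 1, by omega⟩
  have hf := qfact_ne_zero a ha
  rw [carlitzCoeff, lucasWeight, qbinom_of_le a (by omega : k ≤ n - k),
    qbinom_of_le a (by omega : j - k ≤ n - 2 * k), hm, qfact_succ,
    show n - 2 * k - (j - k) = n - j - k by omega, show m + 1 - k = n - 2 * k by omega,
    Nat.add_sub_cancel]
  field_simp [ha (m + 1) m.succ_ne_zero, hf]

theorem carlitzCoeff_succ_mul (ha : ∀ m, m ≠ 0 → qint a m ≠ 0) {n j k : ℕ}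
    (hkj : k < j) (hjk : j + k < n) :
    carlitzCoeff a n j (k + 1) * (qint a (k + 1) * qint a (n - k - 1))
      = -a ^ k * qint a (j - k) * qint a (n - j - k) * carlitzCoeff a n j k := by
  have h0 := carlitzCoeff_mul_qfact ha hkj.le hjk.le (by omega)
  have h1 := carlitzCoeff_mul_qfact ha (n := n) hkj (by omega) (by omega)
  obtain ⟨r, hr⟩ : ∃ r, j - k = r + 1 := ⟨j - k - 1, by omega⟩
  obtain ⟨p, hp⟩ : ∃ p, n - k - 1 = p + 1 := ⟨n - k - 2, by omega⟩
  obtain ⟨s, hs⟩ : ∃ s, n - j - k = s + 1 := ⟨n - j - k - 1, by omega⟩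
  rw [hr, hp, hs, qfact_succ, qfact_succ, qfact_succ] at h0
  rw [show j - (k + 1) = r by omega, show n - (k + 1) - 1 = p by omega,
    show n - j - (k + 1) = s by omega, qfact_succ, Nat.triangle_succ, pow_succ, pow_add] at h1
  rw [hr, hp, hs]
  have hf := qfact_ne_zero a ha
  apply mul_right_cancel₀ (mul_ne_zero (mul_ne_zero (hf k) (hf r)) (hf s))
  linear_combination qint a (p + 1) * h1 + a ^ k * h0

theorem carlitzCoeff_mul_sub (ha : ∀ m, m ≠ 0 → qint a m ≠ 0) {n j i : ℕ} (hij : i < j) :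
    carlitzCoeff a n j i * (qint a j * qint a (n - j) - qint a i * qint a (n - i))
      = -(qint a (i + 1) * qint a (n - i - 1) * carlitzCoeff a n j (i + 1)) := by
  rcases lt_trichotomy (j + i) n with h | h | h
  · obtain ⟨r, rfl⟩ := Nat.exists_eq_add_of_le hij.le
    obtain ⟨s, hs⟩ := Nat.exists_eq_add_of_le h.le
    have hkey : qint a (i + r) * qint a (n - (i + r)) - qint a i * qint a (n - i)
        = a ^ i * qint a r * qint a s := by
      rw [show n - (i + r) = i + s by omega, show n - i = i + r + s by omega]
      exact qint_add_mul_qint_add_sub a i r s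
    have hratio := carlitzCoeff_succ_mul ha (n := n) hij h
    rw [show i + r - i = r by omega, show n - (i + r) - i = s by omega] at hratio
    linear_combination carlitzCoeff a n (i + r) i * hkey + hratio
  · rw [carlitzCoeff_eq_zero hij (by omega), show n - j = i by omega, show n - i = j by omega]
    ring
  · rw [carlitzCoeff_eq_zero hij.le (by omega), carlitzCoeff_eq_zero hij (by omega)]
    ring

theorem sum_range_carlitzCoeff_mul (ha : ∀ m, m ≠ 0 → qint a m ≠ 0) {n j i : ℕ} (hij : i ≤ j) :
    (∑ k ∈ range i, carlitzCoeff a n j k) * (qint a j * qint a (n - j))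
      = -(qint a i * qint a (n - i) * carlitzCoeff a n j i) := by
  induction i with
  | zero => simp [qint]
  | succ i ih =>
    rw [sum_range_succ, add_mul, ih (by omega)]
    linear_combination carlitzCoeff_mul_sub ha (n := n) (Nat.lt_of_succ_le hij)

theorem sum_range_carlitzCoeff (ha : ∀ m, m ≠ 0 → qint a m ≠ 0) {n j : ℕ} (hn : n ≠ 0)
    (hjn : j ≤ n) :
    ∑ k ∈ range (j + 1), carlitzCoeff a n j k
      = (if j = 0 then 1 else 0) + (if j = n then 1 else 0) := by
  by_cases hj : j = 0 ∨ j = n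
  · rw [sum_eq_single 0 (fun k hk hk0 => carlitzCoeff_eq_zero (by simp at hk; omega)
      (by simp at hk; omega)) (by simp), carlitzCoeff_zero_right ha hn]
    rcases hj with rfl | rfl
    · simp [qbinom_zero_right a ha, hn.symm]
    · simp [qbinom_self a ha, hn]
  · have hD : qint a j * qint a (n - j) ≠ 0 := mul_ne_zero (ha j (by omega)) (ha _ (by omega))
    rw [if_neg (by omega), if_neg (by omega), add_zero]
    apply mul_right_cancel₀ hD
    rw [sum_range_succ, add_mul, sum_range_carlitzCoeff_mul ha le_rfl]
    ring

end

theorem rs_eq_sum_range (a x y : K) {m N : ℕ} (h : m ≤ N) :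
    rs a x y m = ∑ i ∈ range (N + 1), qbinom a m i * x ^ i * y ^ (m - i) := by
  refine sum_subset (range_subset_range.mpr (by omega)) fun i _ hi => ?_
  rw [qbinom_of_lt a (by simpa using hi), zero_mul, zero_mul]

theorem neg_mul_pow_mul_rs (a x y : K) {n k : ℕ} (h : 2 * k ≤ n) :
    (-(x * y)) ^ k * rs a x y (n - 2 * k)
      = ∑ i ∈ range (n + 1 - k),
          (-1) ^ k * qbinom a (n - 2 * k) i * x ^ (k + i) * y ^ (n - k - i) := by
  rw [rs_eq_sum_range a x y (N := n - k) (by omega), show n - k + 1 = n + 1 - k by omega, mul_sum]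
  refine sum_congr rfl fun i _ => ?_
  rcases le_or_gt i (n - 2 * k) with hi | hi
  · rw [show n - k - i = k + (n - 2 * k - i) by omega]
    ring
  · rw [qbinom_of_lt a hi]
    ring

theorem sum_lucasWeight_mul_rs (a x y : K) (n : ℕ) :
    ∑ k ∈ range (n / 2 + 1), lucasWeight a n k * (-(x * y)) ^ k * rs a x y (n - 2 * k)
      = ∑ j ∈ range (n + 1), x ^ j * y ^ (n - j) * ∑ k ∈ range (j + 1), carlitzCoeff a n j k := by
  have hext : ∑ k ∈ range (n / 2 + 1), lucasWeight a n k * (-(x * y)) ^ k * rs a x y (n - 2 * k)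
      = ∑ k ∈ range (n + 1), lucasWeight a n k * (-(x * y)) ^ k * rs a x y (n - 2 * k) := by
    refine sum_subset (range_subset_range.mpr (by omega)) fun k _ hk => ?_
    rw [lucasWeight_eq_zero (by simp at hk; omega), zero_mul, zero_mul]
  calc _ = ∑ k ∈ range (n + 1), ∑ i ∈ range (n + 1 - k), (-1) ^ k * lucasWeight a n k
          * qbinom a (n - 2 * k) i * x ^ (k + i) * y ^ (n - k - i) := by
        rw [hext]
        refine sum_congr rfl fun k _ => ?_
        rcases le_or_gt (2 * k) n with hk | hk
        · rw [mul_assoc, neg_mul_pow_mul_rs a x y hk, mul_sum]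
          exact sum_congr rfl fun i _ => by ring
        · simp [lucasWeight_eq_zero hk]
    _ = ∑ j ∈ range (n + 1), ∑ k ∈ range (j + 1), (-1) ^ k * lucasWeight a n k
          * qbinom a (n - 2 * k) (j - k) * x ^ (k + (j - k)) * y ^ (n - k - (j - k)) :=
        (sum_range_diag_flip (n + 1) _).symm
    _ = _ := by
        refine sum_congr rfl fun j _ => ?_
        rw [mul_sum]
        refine sum_congr rfl fun k hk => ?_
        have hkj : k ≤ j := Nat.lt_succ_iff.mp (mem_range.mp hk)
        rw [show k + (j - k) = j by omega, show n - k - (j - k) = n - j by omega, carlitzCoeff]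
        ring

open Polynomial in
theorem qint_q_ne_zero {m : ℕ} (hm : m ≠ 0) : qint q m ≠ 0 := by
  have hpoly : qint q m = algebraMap ℚ[X] K (∑ i ∈ range m, X ^ i) := by
    simp [qint, q, RatFunc.algebraMap_X]
  rw [hpoly, map_ne_zero_iff _ (RatFunc.algebraMap_injective ℚ)]
  intro h
  simpa [hm] using congrArg (eval 1) h

theorem stmt11 (x y : K) (n : ℕ) (hn : 1 ≤ n) :
    x ^ n + y ^ n
      = ∑ k ∈ range (n / 2 + 1), q ^ (k * (k - 1) / 2) * (qint q n / qint q (n - k))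
          * qbinom q (n - k) k * (-(x * y)) ^ k * rs q x y (n - 2 * k) := by
  have hq : ∀ m, m ≠ 0 → qint q m ≠ 0 := fun _ => qint_q_ne_zero
  calc x ^ n + y ^ n
      = ∑ j ∈ range (n + 1), x ^ j * y ^ (n - j)
          * ((if j = 0 then 1 else 0) + (if j = n then 1 else 0)) := by
        simp [mul_add, sum_add_distrib, add_comm]
    _ = ∑ j ∈ range (n + 1), x ^ j * y ^ (n - j) * ∑ k ∈ range (j + 1), carlitzCoeff q n j k :=
        sum_congr rfl fun j hj => by
          rw [sum_range_carlitzCoeff hq (by omega) (by simpa [Nat.lt_succ_iff] using hj)]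
    _ = _ := (sum_lucasWeight_mul_rs q x y n).symm
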